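/- Let n be a positive even integer and T an n-tournament with vertices v_1,...,v_n such that T restricted to {v_1,...,v_{n-1}} is transitive. Then det(T) ≤ (n-1)^2, with equality if and only if v_n's dominance pattern over the transitive ordering v_1 → ... → v_{n-1} strictly alternates (i.e., T is switching equivalent to L_n). -/

import Mathlib

open scoped Classical

/-- A tournament: irreflexive, and between distinct vertices exactly one arc. -/
def IsTournament {V : Type*} (r : V → V → Prop) : Prop :=
  (∀ i, ¬ r i i) ∧ ∀ i j, i ≠ j → (r i j ↔ ¬ r j i)

/-- Skew-adjacency matrix of a relation. -/
noncomputable def skew {V : Type*} (r : V → V → Prop) : Matrix V V ℤ :=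
  Matrix.of fun i j => if r i j then 1 else if r j i then -1 else 0

/-- Determinant of the skew-adjacency matrix. -/
noncomputable def tdet {V : Type*} [Fintype V] [DecidableEq V] (r : V → V → Prop) : ℤ :=
  (skew r).det

/-- Determinant of the subtournament induced by a finite vertex subset. -/
noncomputable def subdet {V : Type*} [Fintype V] [DecidableEq V] (r : V → V → Prop)
    (s : Finset V) : ℤ :=
  ((skew r).submatrix (fun x : {x // x ∈ s} => x.1) (fun x : {x // x ∈ s} => x.1)).det

/-- Switch of `r` with respect to `W`: arcs between `W` and its complement are reversed. -/
def switchRel {V : Type*} (r : V → V → Prop) (W : Set V) : V → V → Prop :=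
  fun i j => if (i ∈ W ↔ j ∈ W) then r i j else r j i

/-- Switching equivalence of two tournaments on the same vertex set. -/
def SwitchEquiv {V : Type*} (r₁ r₂ : V → V → Prop) : Prop :=
  ∃ W : Set V, ∀ i j, r₂ i j ↔ switchRel r₁ W i j

def IsTransitive {V : Type*} (r : V → V → Prop) : Prop :=
  ∀ a b c, r a b → r b c → r a c

def IsTransitiveOn {V : Type*} (r : V → V → Prop) (X : Finset V) : Prop :=
  ∀ a ∈ X, ∀ b ∈ X, ∀ c ∈ X, r a b → r b c → r a c

/-- A 4-set inducing a diamond: a vertex dominating or dominated by a 3-cycle. -/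
def IsDiamond {V : Type*} (r : V → V → Prop) (X : Finset V) : Prop :=
  ∃ a b c d : V, X = {a, b, c, d} ∧ a ≠ b ∧ a ≠ c ∧ a ≠ d ∧ b ≠ c ∧ b ≠ d ∧ c ≠ d ∧
    r b c ∧ r c d ∧ r d b ∧ ((r a b ∧ r a c ∧ r a d) ∨ (r b a ∧ r c a ∧ r d a))

/-- Number of diamonds of a tournament. -/
noncomputable def numDiamonds {V : Type*} [Fintype V] (r : V → V → Prop) : ℕ :=
  Set.ncard {X : Finset V | IsDiamond r X}

/-- The tournament `L_n`: a transitive chain `u_0 → ⋯ → u_{n-2}` together with a last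
vertex alternating along the chain, starting with `u_{n-1} → u_0`. -/
def LRel (n : ℕ) : Fin n → Fin n → Prop := fun i j =>
  (j.val < n - 1 ∧ i.val < j.val) ∨
  (j.val = n - 1 ∧ i.val < n - 1 ∧ i.val % 2 = 1) ∨
  (i.val = n - 1 ∧ j.val < n - 1 ∧ j.val % 2 = 0)

/-- Join of two tournaments: all arcs from the first to the second. -/
def joinRel {A B : Type*} (r : A → A → Prop) (s : B → B → Prop) : A ⊕ B → A ⊕ B → Prop :=
  fun x y => match x, y with
  | .inl a, .inl a' => r a a'
  | .inr b, .inr b' => s b b'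
  | .inl _, .inr _ => True
  | .inr _, .inl _ => False

/-- `T⁺`: add one new vertex dominated by every vertex of `T`. -/
def plusRel {A : Type*} (r : A → A → Prop) : Option A → Option A → Prop :=
  fun x y => match x, y with
  | some a, some b => r a b
  | some _, none => True
  | _, _ => False

/-- Blowup of `r` by the family of tournaments `t`. -/
def blowupG {ι : Type*} [DecidableEq ι] (r : ι → ι → Prop) {κ : ι → Type*}
    (t : ∀ i, κ i → κ i → Prop) : (Σ i, κ i) → (Σ i, κ i) → Prop :=
  fun x y => if h : x.1 = y.1 then t y.1 (h ▸ x.2) y.2 else r x.1 y.1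

/-- Transitive `(a_1,…,a_n)`-blowup of `r`. -/
def blowup {ι : Type*} [DecidableEq ι] (r : ι → ι → Prop) (a : ι → ℕ) :
    (Σ i, Fin (a i)) → (Σ i, Fin (a i)) → Prop :=
  blowupG r (fun _ p q => p < q)

/-- Membership in `𝒟_k`: every subtournament has determinant at most `k²`. -/
def memD {V : Type*} [Fintype V] [DecidableEq V] (r : V → V → Prop) (k : ℕ) : Prop :=
  ∀ s : Finset V, subdet r s ≤ (k : ℤ) ^ 2

/-!
After relabelling, the transitive part of `T` is the chain `0 → 1 → ⋯ → m - 1` (`m = n - 1`,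
odd) and the skew matrix of `T` is the skew matrix of the chain bordered by the column `ε` of
signs `±1` recording the arcs towards the last vertex. The Schur complement of the block of the
two top chain vertices is a bordered chain of the same kind on `m - 2` vertices, with `ε` shifted
by a constant; this leaves `S = ∑ⱼ (-1)ʲ εⱼ` unchanged, so `det T = S²`. Now `|S| ≤ m`, with
equality iff all the terms `(-1)ʲ εⱼ` are equal, that is, iff `ε` alternates: then, up to
relabelling, `T` itself or `T` switched at its last vertex is `L_n`.
-/

open Matrix

section Relations

variable {V : Type*}

theorem skew_apply (r : V → V → Prop) (i j : V) :
    skew r i j = if r i j then 1 else if r j i then -1 else 0 := rfl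

theorem rel_iff_skew_eq_one (r : V → V → Prop) (i j : V) : r i j ↔ skew r i j = 1 := by
  by_cases h : r i j <;> by_cases h' : r j i <;> simp [skew_apply, h, h']

theorem skew_apply_swap {r : V → V → Prop} (hr : ∀ i j, r i j → ¬ r j i) (i j : V) :
    skew r j i = -skew r i j := by
  by_cases h : r i j
  · simp [skew_apply, h, hr i j h]
  · by_cases h' : r j i <;> simp [skew_apply, h, h']

theorem tdet_comp_equiv [Fintype V] [DecidableEq V] (r : V → V → Prop) (e : V ≃ V) :
    tdet (fun i j => r (e i) (e j)) = tdet r :=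
  det_submatrix_equiv_self e (skew r)

theorem IsTournament.asymm {r : V → V → Prop} (hT : IsTournament r) (i j : V) :
    r i j → ¬ r j i := by
  rcases eq_or_ne i j with rfl | hij
  · exact fun h _ => hT.1 i h
  · exact (hT.2 i j hij).1

theorem IsTournament.comp_equiv {r : V → V → Prop} (hT : IsTournament r) (e : V ≃ V) :
    IsTournament fun i j => r (e i) (e j) :=
  ⟨fun i => hT.1 (e i), fun i j hij => hT.2 (e i) (e j) (e.injective.ne hij)⟩

theorem switchRel_asymm {r : V → V → Prop} (hr : ∀ i j, r i j → ¬ r j i) (W : Set V) (i j : V) :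
    switchRel r W i j → ¬ switchRel r W j i := by
  unfold switchRel
  by_cases h : i ∈ W ↔ j ∈ W
  · rw [if_pos h, if_pos h.symm]; exact hr i j
  · rw [if_neg h, if_neg (mt Iff.symm h)]; exact hr j i

theorem skew_switchRel_apply (r : V → V → Prop) (W : Set V) (i j : V) :
    skew (switchRel r W) i j = if (i ∈ W ↔ j ∈ W) then skew r i j else skew r j i := by
  by_cases h : i ∈ W ↔ j ∈ W
  · simp only [skew_apply, switchRel, if_pos h, if_pos h.symm]
  · simp only [skew_apply, switchRel, if_neg h, if_neg (mt Iff.symm h)]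

theorem tdet_switchRel [Fintype V] [DecidableEq V] {r : V → V → Prop}
    (hr : ∀ i j, r i j → ¬ r j i) (W : Set V) : tdet (switchRel r W) = tdet r := by
  let d : V → ℤ := fun i => if i ∈ W then -1 else 1
  have hconj : skew (switchRel r W) = diagonal d * skew r * diagonal d := by
    ext i j
    rw [mul_diagonal, diagonal_mul, skew_switchRel_apply]
    by_cases hi : i ∈ W <;> by_cases hj : j ∈ W <;> simp [d, hi, hj, skew_apply_swap hr i j]
  have hd : (∏ i, d i) * ∏ i, d i = 1 := by
    rw [← Finset.prod_mul_distrib]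
    exact Finset.prod_eq_one fun i _ => by by_cases hi : i ∈ W <;> simp [d, hi]
  rw [tdet, tdet, hconj, det_mul, det_mul, det_diagonal]
  linear_combination (skew r).det * hd

theorem switchEquiv_of_switchRel_comp_eq {r s : V → V → Prop} (σ : V ≃ V) {W : Set V}
    (h : switchRel (fun i j => r (σ i) (σ j)) W = s) :
    SwitchEquiv r fun i j => s (σ.symm i) (σ.symm j) :=
  ⟨σ.symm ⁻¹' W, fun i j => by subst h; simp [switchRel]⟩

end Relations

section SignSums

variable {ι : Type*} [Fintype ι] {x : ι → ℤ}

theorem sq_sum_le_card_sq (hx : ∀ i, x i = 1 ∨ x i = -1) :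
    (∑ i, x i) ^ 2 ≤ (Fintype.card ι : ℤ) ^ 2 := by
  have habs : |∑ i, x i| ≤ Fintype.card ι := by
    have h1 (i : ι) : |x i| = 1 := by rcases hx i with h | h <;> simp [h]
    refine (Finset.abs_sum_le_sum_abs _ _).trans_eq ?_
    simp [h1]
  exact sq_le_sq' (abs_le.1 habs).1 (abs_le.1 habs).2

theorem sq_sum_eq_card_sq_iff (hx : ∀ i, x i = 1 ∨ x i = -1) :
    (∑ i, x i) ^ 2 = (Fintype.card ι : ℤ) ^ 2 ↔ (∀ i, x i = 1) ∨ (∀ i, x i = -1) := by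
  have hle (i : ι) : x i ≤ 1 := by rcases hx i with h | h <;> omega
  have hge (i : ι) : -1 ≤ x i := by rcases hx i with h | h <;> omega
  have hcard : (Fintype.card ι : ℤ) = ∑ _i : ι, 1 := by simp
  rw [sq_eq_sq_iff_eq_or_eq_neg, hcard, ← Finset.sum_neg_distrib, eq_comm (b := ∑ _i : ι, -1),
    Finset.sum_eq_sum_iff_of_le fun i _ => hle i, Finset.sum_eq_sum_iff_of_le fun i _ => hge i]
  simp only [Finset.mem_univ, true_implies, eq_comm (a := (-1 : ℤ))]

end SignSums

theorem exists_equiv_fin_rel_iff_lt {α : Type*} [Fintype α] {m : ℕ} (hcard : Fintype.card α = m)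
    {R : α → α → Prop} (hirr : ∀ a, ¬ R a a) (htrans : ∀ a b c, R a b → R b c → R a c)
    (htotal : ∀ a b, a ≠ b → R a b ∨ R b a) :
    ∃ π : Fin m ≃ α, ∀ i j, R (π i) (π j) ↔ i < j := by
  let score (a : α) : ℕ := (Finset.univ.filter fun b => R b a).card
  have hscore_lt (a : α) : score a < m :=
    hcard ▸ Finset.card_lt_univ_of_notMem (x := a) (by simp [hirr a])
  have hscore_mono {a b : α} (h : R a b) : score a < score b := by
    refine Finset.card_lt_card (Finset.ssubset_iff_of_subset ?_ |>.2 ⟨a, ?_, ?_⟩)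
    · intro c; simpa using fun hca => htrans c a b hca h
    · simpa using h
    · simpa using hirr a
  let f (a : α) : Fin m := ⟨score a, hscore_lt a⟩
  have hf {a b : α} : R a b ↔ f a < f b := by
    refine ⟨hscore_mono, fun hlt => ?_⟩
    rcases eq_or_ne a b with rfl | hab
    · exact absurd hlt (lt_irrefl _)
    · exact (htotal a b hab).resolve_right fun hba => (hscore_mono hba).not_gt hlt
  have hinj : Function.Injective f := fun a b hab => by
    by_contra hne
    rcases htotal a b hne with h | h
    · exact (hf.1 h).ne hab
    · exact (hf.1 h).ne hab.symm
  have hbij : Function.Bijective f :=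
    (Fintype.bijective_iff_injective_and_card f).2 ⟨hinj, by simp [hcard]⟩
  refine ⟨(Equiv.ofBijective f hbij).symm, fun i j => ?_⟩
  rw [hf, Equiv.ofBijective_apply_symm_apply f, Equiv.ofBijective_apply_symm_apply f]

theorem exists_perm_castSucc_chain {m : ℕ} {r : Fin (m + 1) → Fin (m + 1) → Prop}
    (hT : IsTournament r)
    (htr : ∀ a b c : Fin m, r a.castSucc b.castSucc → r b.castSucc c.castSucc →
      r a.castSucc c.castSucc) :
    ∃ σ : Equiv.Perm (Fin (m + 1)), ∀ a b : Fin m, r (σ a.castSucc) (σ b.castSucc) ↔ a < b := by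
  obtain ⟨π, hπ⟩ := exists_equiv_fin_rel_iff_lt (Fintype.card_fin m)
    (fun a => hT.1 a.castSucc) htr
    (fun a b hab => (em _).imp_right (hT.2 _ _ (Fin.castSucc_injective m |>.ne hab.symm)).2)
  refine ⟨finSuccEquivLast.trans ((Equiv.optionCongr π).trans finSuccEquivLast.symm), ?_⟩
  simpa using hπ

noncomputable def borderedChain {k : ℕ} (ε : Fin k → ℤ) :
    Matrix (Fin k ⊕ Fin 1) (Fin k ⊕ Fin 1) ℤ :=
  fromBlocks (skew (· < ·)) (replicateCol (Fin 1) ε) (-replicateRow (Fin 1) ε) 0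

def altSum {k : ℕ} (ε : Fin k → ℤ) : ℤ := ∑ j : Fin k, (-1) ^ (j : ℕ) * ε j

theorem sum_neg_one_pow_of_odd {k : ℕ} (hk : Odd k) : ∑ j : Fin k, (-1 : ℤ) ^ (j : ℕ) = 1 := by
  rw [Fin.sum_univ_eq_sum_range (fun j => (-1 : ℤ) ^ j), neg_one_geom_sum,
    if_neg (Nat.not_even_iff_odd.2 hk)]

def peelTopTwo (k : ℕ) : (Fin k ⊕ Fin 1) ⊕ Fin 2 ≃ Fin (k + 2) ⊕ Fin 1 :=
  (Equiv.sumAssoc _ _ _).trans <| (Equiv.sumCongr (Equiv.refl _) (Equiv.sumComm _ _)).trans <|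
    (Equiv.sumAssoc _ _ _).symm.trans (Equiv.sumCongr finSumFinEquiv (Equiv.refl _))

@[simp] theorem peelTopTwo_inl_inl {k : ℕ} (j : Fin k) :
    peelTopTwo k (.inl (.inl j)) = .inl (Fin.castAdd 2 j) := rfl
@[simp] theorem peelTopTwo_inl_inr {k : ℕ} (a : Fin 1) :
    peelTopTwo k (.inl (.inr a)) = .inr a := rfl
@[simp] theorem peelTopTwo_inr {k : ℕ} (a : Fin 2) :
    peelTopTwo k (.inr a) = .inl (Fin.natAdd k a) := rfl

/-- Schur complement with respect to the block of the two top chain vertices. -/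
theorem det_borderedChain_add_two {k : ℕ} (ε : Fin (k + 2) → ℤ) :
    (borderedChain ε).det = (borderedChain fun j =>
      ε (Fin.castAdd 2 j) + (ε (Fin.natAdd k 1) - ε (Fin.natAdd k 0))).det := by
  rw [← det_submatrix_equiv_self (peelTopTwo k)]
  set M := (borderedChain ε).submatrix (peelTopTwo k) (peelTopTwo k)
  have hD : M.toBlocks₂₂ = !![0, 1; -1, 0] := by
    ext a b
    fin_cases a <;> fin_cases b <;> simp [M, toBlocks₂₂, borderedChain, skew]
  have hDinv : M.toBlocks₂₂ * -!![0, 1; -1, 0] = 1 := by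
    rw [hD]; ext a b; fin_cases a <;> fin_cases b <;> simp
  have hdetD : M.toBlocks₂₂.det = 1 := by simp [hD, det_fin_two_of]
  let _ := invertibleOfRightInverse _ _ hDinv
  rw [← fromBlocks_toBlocks M, det_fromBlocks₂₂, hdetD, one_mul, invOf_eq_right_inv hDinv]
  have hlt (x : Fin k) (a : Fin 2) : Fin.castAdd 2 x < Fin.natAdd k a := by
    simp only [Fin.lt_def, Fin.val_castAdd, Fin.val_natAdd]; omega
  have hcast (x y : Fin k) : Fin.castAdd 2 x < Fin.castAdd 2 y ↔ x < y := by
    simp only [Fin.lt_def, Fin.val_castAdd]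
  congr 1
  refine Matrix.ext fun x y => ?_
  rcases x with x | x <;> rcases y with y | y <;>
    simp only [M, toBlocks₁₁, toBlocks₁₂, toBlocks₂₁, borderedChain, skew, submatrix_apply,
      peelTopTwo_inl_inl, peelTopTwo_inl_inr, peelTopTwo_inr, fromBlocks_apply₁₁,
      fromBlocks_apply₁₂, fromBlocks_apply₂₁, fromBlocks_apply₂₂, replicateCol_apply,
      replicateRow_apply, of_apply, Matrix.neg_apply, Matrix.zero_apply, Matrix.sub_apply,
      mul_apply, Fin.sum_univ_two, cons_val', cons_val_zero, cons_val_one, cons_val_fin_one,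
      hcast, hlt, fun x a => lt_asymm (hlt x a), if_true, if_false]
  · split_ifs <;> ring
  all_goals ring

theorem altSum_add_two {k : ℕ} (hk : Odd k) (ε : Fin (k + 2) → ℤ) :
    altSum ε = altSum fun j =>
      ε (Fin.castAdd 2 j) + (ε (Fin.natAdd k 1) - ε (Fin.natAdd k 0)) := by
  simp only [altSum, Fin.sum_univ_add, Fin.sum_univ_two, Fin.val_castAdd, Fin.val_natAdd, mul_add,
    Finset.sum_add_distrib, ← Finset.sum_mul, sum_neg_one_pow_of_odd hk, Fin.val_zero, Fin.val_one,
    add_zero, pow_succ, hk.neg_one_pow]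
  ring

theorem det_borderedChain_one (ε : Fin 1 → ℤ) : (borderedChain ε).det = ε 0 ^ 2 := by
  rw [← det_submatrix_equiv_self finSumFinEquiv.symm, det_fin_two]
  have h0 : (finSumFinEquiv.symm (0 : Fin 2) : Fin 1 ⊕ Fin 1) = .inl 0 := rfl
  have h1 : (finSumFinEquiv.symm (1 : Fin 2) : Fin 1 ⊕ Fin 1) = .inr 0 := rfl
  simp only [borderedChain, skew, submatrix_apply, h0, h1, fromBlocks_apply₁₁, fromBlocks_apply₁₂,
    fromBlocks_apply₂₁, fromBlocks_apply₂₂, of_apply, lt_self_iff_false, if_false,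
    replicateCol_apply, replicateRow_apply, Matrix.neg_apply, Matrix.zero_apply]
  ring

theorem det_borderedChain : ∀ {k : ℕ}, Odd k → ∀ ε : Fin k → ℤ,
    (borderedChain ε).det = altSum ε ^ 2
  | 0, hk, _ => absurd hk (by decide)
  | 1, _, ε => by simp [det_borderedChain_one, altSum]
  | k + 2, hk, ε => by
    have hk' : Odd k := by simpa [Nat.odd_add] using hk
    rw [det_borderedChain_add_two, det_borderedChain hk', ← altSum_add_two hk']

noncomputable def lastCol {k : ℕ} (r : Fin (k + 1) → Fin (k + 1) → Prop) (a : Fin k) : ℤ :=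
  skew r a.castSucc (Fin.last k)

section Chain

variable {k : ℕ} {r : Fin (k + 1) → Fin (k + 1) → Prop}

theorem skew_submatrix_finSumFinEquiv (hr : ∀ i j, r i j → ¬ r j i)
    (hchain : ∀ a b : Fin k, r a.castSucc b.castSucc ↔ a < b) :
    (skew r).submatrix finSumFinEquiv finSumFinEquiv = borderedChain (lastCol r) := by
  have hrestrict : (fun a b : Fin k => r a.castSucc b.castSucc) = (· < ·) :=
    funext₂ fun a b => propext (hchain a b)
  refine Matrix.ext fun x y => ?_
  rcases x with a | x <;> rcases y with b | y
  · exact congrFun₂ (congrArg skew hrestrict) a b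
  · fin_cases y; rfl
  · fin_cases x; exact skew_apply_swap hr _ _
  · fin_cases x; fin_cases y
    have hirr : ¬ r (Fin.last k) (Fin.last k) := fun h => hr _ _ h h
    show skew r (Fin.last k) (Fin.last k) = 0
    simp [skew_apply, hirr]

theorem tdet_eq_altSum_sq (hk : Odd k) (hr : ∀ i j, r i j → ¬ r j i)
    (hchain : ∀ a b : Fin k, r a.castSucc b.castSucc ↔ a < b) :
    tdet r = altSum (lastCol r) ^ 2 := by
  rw [tdet, ← det_submatrix_equiv_self finSumFinEquiv, skew_submatrix_finSumFinEquiv hr hchain,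
    det_borderedChain hk]

theorem eq_of_lastCol_eq {s : Fin (k + 1) → Fin (k + 1) → Prop}
    (hr : ∀ i j, r i j → ¬ r j i) (hrchain : ∀ a b : Fin k, r a.castSucc b.castSucc ↔ a < b)
    (hs : ∀ i j, s i j → ¬ s j i) (hschain : ∀ a b : Fin k, s a.castSucc b.castSucc ↔ a < b)
    (h : lastCol r = lastCol s) : r = s := by
  have hskew : skew r = skew s := (reindex finSumFinEquiv.symm finSumFinEquiv.symm).injective <| by
    simp only [reindex_apply, Equiv.symm_symm, skew_submatrix_finSumFinEquiv hr hrchain,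
      skew_submatrix_finSumFinEquiv hs hschain, h]
  exact funext₂ fun i j => propext <| by rw [rel_iff_skew_eq_one r, rel_iff_skew_eq_one s, hskew]

theorem lastCol_eq_one_or_neg_one (hT : IsTournament r) (a : Fin k) :
    lastCol r a = 1 ∨ lastCol r a = -1 := by
  rcases em (r a.castSucc (Fin.last k)) with h | h
  · simp [lastCol, skew_apply, h]
  · have h' := (hT.2 _ _ (Fin.castSucc_lt_last a).ne').2 h
    simp [lastCol, skew_apply, h, h']

theorem lastCol_switchRel_last (hr : ∀ i j, r i j → ¬ r j i) :
    lastCol (switchRel r {Fin.last k}) = -lastCol r := by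
  funext a
  rw [lastCol, skew_switchRel_apply, if_neg (by simp [(Fin.castSucc_lt_last a).ne]),
    skew_apply_swap hr, Pi.neg_apply, lastCol]

theorem switchRel_last_castSucc (a b : Fin k) :
    switchRel r {Fin.last k} a.castSucc b.castSucc ↔ r a.castSucc b.castSucc := by
  simp [switchRel, (Fin.castSucc_lt_last a).ne, (Fin.castSucc_lt_last b).ne]

end Chain

section LTournament

variable {k : ℕ}

theorem LRel_asymm (i j : Fin (k + 1)) : LRel (k + 1) i j → ¬ LRel (k + 1) j i := by
  simp only [LRel]; omega

theorem LRel_castSucc (a b : Fin k) : LRel (k + 1) a.castSucc b.castSucc ↔ a < b := by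
  simp only [LRel, Fin.val_castSucc, Fin.lt_def]; omega

theorem LRel_castSucc_last (a : Fin k) :
    LRel (k + 1) a.castSucc (Fin.last k) ↔ (a : ℕ) % 2 = 1 := by
  simp only [LRel, Fin.val_castSucc, Fin.val_last]; omega

theorem LRel_last_castSucc (a : Fin k) :
    LRel (k + 1) (Fin.last k) a.castSucc ↔ (a : ℕ) % 2 = 0 := by
  simp only [LRel, Fin.val_castSucc, Fin.val_last]; omega

theorem lastCol_LRel (a : Fin k) : lastCol (LRel (k + 1)) a = -(-1) ^ (a : ℕ) := by
  rcases Nat.even_or_odd a with h | h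
  · simp [lastCol, skew_apply, LRel_castSucc_last, LRel_last_castSucc, Nat.even_iff.1 h,
      h.neg_one_pow]
  · simp [lastCol, skew_apply, LRel_castSucc_last, Nat.odd_iff.1 h, h.neg_one_pow]

theorem tdet_LRel (hk : Odd k) : tdet (LRel (k + 1)) = (k : ℤ) ^ 2 := by
  rw [tdet_eq_altSum_sq hk LRel_asymm LRel_castSucc]
  simp [altSum, lastCol_LRel, ← pow_add, ← two_mul, pow_mul]

end LTournament

section Extremal

variable {k : ℕ} {r : Fin (k + 1) → Fin (k + 1) → Prop}

theorem neg_one_pow_mul_lastCol (hT : IsTournament r) (a : Fin k) :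
    (-1) ^ (a : ℕ) * lastCol r a = 1 ∨ (-1) ^ (a : ℕ) * lastCol r a = -1 := by
  rcases neg_one_pow_eq_or ℤ a with h | h <;> rcases lastCol_eq_one_or_neg_one hT a with h' | h' <;>
    simp [h, h']

theorem sq_altSum_lastCol_le (hT : IsTournament r) : altSum (lastCol r) ^ 2 ≤ (k : ℤ) ^ 2 := by
  simpa [altSum] using sq_sum_le_card_sq (neg_one_pow_mul_lastCol hT)

theorem exists_switchRel_eq_LRel (hT : IsTournament r)
    (hchain : ∀ a b : Fin k, r a.castSucc b.castSucc ↔ a < b)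
    (h : altSum (lastCol r) ^ 2 = (k : ℤ) ^ 2) : ∃ W, switchRel r W = LRel (k + 1) := by
  have hsign (a : Fin k) : lastCol r a = (-1) ^ (a : ℕ) * ((-1) ^ (a : ℕ) * lastCol r a) := by
    rw [← mul_assoc, ← mul_pow, neg_one_mul, neg_neg, one_pow, one_mul]
  rcases (sq_sum_eq_card_sq_iff (neg_one_pow_mul_lastCol hT)).1 (by simpa [altSum] using h)
    with hplus | hminus
  · refine ⟨{Fin.last k}, eq_of_lastCol_eq (switchRel_asymm hT.asymm _)
      (fun a b => (switchRel_last_castSucc a b).trans (hchain a b)) LRel_asymm LRel_castSucc ?_⟩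
    funext a
    rw [lastCol_switchRel_last hT.asymm, lastCol_LRel, Pi.neg_apply, hsign, hplus, mul_one]
  · refine ⟨∅, ?_⟩
    have hempty : switchRel r ∅ = r := by funext i j; simp [switchRel]
    rw [hempty]
    refine eq_of_lastCol_eq hT.asymm hchain LRel_asymm LRel_castSucc ?_
    funext a
    rw [lastCol_LRel, hsign, hminus, mul_neg_one]

end Extremal

theorem stmt18 {n : ℕ} (hn : Even n) (hpos : 0 < n) (r : Fin n → Fin n → Prop)
    (hT : IsTournament r)
    (htr : IsTransitiveOn r (Finset.univ.filter fun i : Fin n => i.val < n - 1)) :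
    tdet r ≤ ((n : ℤ) - 1) ^ 2 ∧
      (tdet r = ((n : ℤ) - 1) ^ 2 ↔
        ∃ e : Fin n ≃ Fin n, SwitchEquiv r (fun i j => LRel n (e i) (e j))) := by
  obtain ⟨m, rfl⟩ := Nat.exists_eq_add_one_of_ne_zero hpos.ne'
  have hm : Odd m := Nat.not_even_iff_odd.1 (Nat.even_add_one.1 hn)
  have hchain_mem (a : Fin m) :
      a.castSucc ∈ Finset.univ.filter fun i : Fin (m + 1) => i.val < m + 1 - 1 := by
    simp
  obtain ⟨σ, hσ⟩ := exists_perm_castSucc_chain hT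
    fun a b c => htr _ (hchain_mem a) _ (hchain_mem b) _ (hchain_mem c)
  have hT' := hT.comp_equiv σ
  have hdet : tdet r = altSum (lastCol fun i j => r (σ i) (σ j)) ^ 2 := by
    rw [← tdet_comp_equiv r σ, tdet_eq_altSum_sq hm hT'.asymm hσ]
  rw [show ((m + 1 : ℕ) : ℤ) - 1 = m by push_cast; ring]
  refine ⟨hdet ▸ sq_altSum_lastCol_le hT', fun h => ?_, fun ⟨e, W, hW⟩ => ?_⟩
  · obtain ⟨W, hW⟩ := exists_switchRel_eq_LRel hT' hσ (hdet ▸ h)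
    exact ⟨σ.symm, switchEquiv_of_switchRel_comp_eq σ hW⟩
  · have hLW : (fun i j => LRel (m + 1) (e i) (e j)) = switchRel r W :=
      funext₂ fun i j => propext (hW i j)
    rw [← tdet_switchRel hT.asymm W, ← hLW, tdet_comp_equiv, tdet_LRel hm]
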